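/- Fix η ∈ (0,1). Suppose (B̂, K̂) is an optimal solution of the convex program CP_η and K̂ is a valid clustering matrix. Then the clustering given by K̂ minimizes the number of observed disagreements: for every valid clustering matrix K on n nodes, the number of observed pairs (i,j), i ≠ j, with a_ij ≠ K̂_ij is at most the number of observed pairs (i,j), i ≠ j, with a_ij ≠ K_ij. -/

import Mathlib

open Matrix MeasureTheory

open scoped Classical

/-- Keep the entries of `M` indexed by `S` and zero out the rest. -/
noncomputable def projS {n : ℕ} (S : Set (Fin n × Fin n)) (M : Matrix (Fin n) (Fin n) ℝ) :
    Matrix (Fin n) (Fin n) ℝ :=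
  Matrix.of fun i j => if (i, j) ∈ S then M i j else 0

/-- Zero out the entries of `M` indexed by `S` (projection onto the complement). -/
noncomputable def zeroOn {n : ℕ} (S : Set (Fin n × Fin n)) (M : Matrix (Fin n) (Fin n) ℝ) :
    Matrix (Fin n) (Fin n) ℝ :=
  Matrix.of fun i j => if (i, j) ∈ S then 0 else M i j

/-- Entrywise ℓ₁ norm. -/
noncomputable def l1Norm {n : ℕ} (M : Matrix (Fin n) (Fin n) ℝ) : ℝ := ∑ i, ∑ j, |M i j|

/-- Entrywise ℓ∞ norm (max of absolute values of the entries). -/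
noncomputable def linfNorm {n : ℕ} (M : Matrix (Fin n) (Fin n) ℝ) : ℝ :=
  sSup (Set.range fun q : Fin n × Fin n => |M q.1 q.2|)

/-- Frobenius norm. -/
noncomputable def frobNorm {n : ℕ} (M : Matrix (Fin n) (Fin n) ℝ) : ℝ :=
  Real.sqrt (∑ i, ∑ j, (M i j) ^ 2)

/-- Nuclear norm: the sum of the singular values, i.e. the trace of `√(MᴴM)`. -/
noncomputable def nuclearNorm {n : ℕ} (M : Matrix (Fin n) (Fin n) ℝ) : ℝ :=
  let hA := Matrix.posSemidef_conjTranspose_mul_self M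
  (hA.1.eigenvectorUnitary.1 * Matrix.diagonal (Real.sqrt ∘ hA.1.eigenvalues) *
    (star hA.1.eigenvectorUnitary : Matrix (Fin n) (Fin n) ℝ)).trace

/-- Spectral norm: the operator norm as a map between Euclidean spaces. -/
noncomputable def specNorm {m l : Type*} [Fintype m] [Fintype l] [DecidableEq l]
    (M : Matrix m l ℝ) : ℝ :=
  ‖LinearMap.toContinuousLinearMap (Matrix.toEuclideanLin M)‖

/-- Entrywise sign matrix. -/
noncomputable def sgnMat {n : ℕ} (M : Matrix (Fin n) (Fin n) ℝ) : Matrix (Fin n) (Fin n) ℝ :=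
  Matrix.of fun i j => Real.sign (M i j)

/-- The support of a matrix, as a set of index pairs. -/
def suppSet {n : ℕ} (M : Matrix (Fin n) (Fin n) ℝ) : Set (Fin n × Fin n) :=
  {q | M q.1 q.2 ≠ 0}

/-- A matrix is a valid clustering matrix iff for some assignment of nodes to clusters,
`K i j = 1` when `i, j` are in the same cluster and `K i j = 0` otherwise. -/
def IsValidClustering {n : ℕ} (K : Matrix (Fin n) (Fin n) ℝ) : Prop :=
  ∃ f : Fin n → Fin n, ∀ i j, K i j = if f i = f j then 1 else 0

/-- Objective of the convex program CP_η. -/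
noncomputable def cpObj {n : ℕ} (η : ℝ) (B K : Matrix (Fin n) (Fin n) ℝ) : ℝ :=
  η * l1Norm B + (1 - η) * nuclearNorm K

/-- Feasibility for the convex program: `P_Ωobs (B + K) = P_Ωobs (I + A)`. -/
def cpFeasible {n : ℕ} (Obs : Set (Fin n × Fin n)) (A B K : Matrix (Fin n) (Fin n) ℝ) : Prop :=
  projS Obs (B + K) = projS Obs (1 + A)

/-- Number of observed disagreements of the clustering matrix `K` with the observed graph. -/
noncomputable def disagreements {n : ℕ} (Obs : Set (Fin n × Fin n))
    (A K : Matrix (Fin n) (Fin n) ℝ) : ℕ :=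
  {q : Fin n × Fin n | q.1 ≠ q.2 ∧ q ∈ Obs ∧ A q.1 q.2 ≠ K q.1 q.2}.ncard

/-- Size of cluster `j` under the assignment `c`. -/
noncomputable def clusterSize {n p : ℕ} (c : Fin n → Fin p) (j : Fin p) : ℕ :=
  {i : Fin n | c i = j}.ncard

/-- Minimum cluster size. -/
noncomputable def KminVal {n p : ℕ} (c : Fin n → Fin p) : ℕ :=
  sInf (Set.range fun j => clusterSize c j)

/-- The valid clustering matrix associated to the assignment `c`. -/
noncomputable def Kmat {n p : ℕ} (c : Fin n → Fin p) : Matrix (Fin n) (Fin n) ℝ :=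
  Matrix.of fun i j => if c i = c j then 1 else 0

/-- The matrix of observed disagreements of the clustering `c`. -/
noncomputable def Bstar {n p : ℕ} (Obs : Set (Fin n × Fin n)) (A : Matrix (Fin n) (Fin n) ℝ)
    (c : Fin n → Fin p) : Matrix (Fin n) (Fin n) ℝ :=
  projS Obs (A + 1 - Kmat c)

/-- Index set of Γ: observed non-disagreement entries (includes the diagonal). -/
def GammaSet {n p : ℕ} (Obs : Set (Fin n × Fin n)) (A : Matrix (Fin n) (Fin n) ℝ)
    (c : Fin n → Fin p) : Set (Fin n × Fin n) :=
  {q | q ∈ Obs ∧ Bstar Obs A c q.1 q.2 = 0}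

/-- The matrix `U` whose `j`-th column is `K_j^{-1/2}` on the indices of cluster `j`. -/
noncomputable def Umat {n p : ℕ} (c : Fin n → Fin p) : Matrix (Fin n) (Fin p) ℝ :=
  Matrix.of fun i j => if c i = j then (Real.sqrt (clusterSize c j))⁻¹ else 0

/-- The subspace `T = {U Xᵀ + Y Uᵀ}` as a set of matrices. -/
def Tspace {n p : ℕ} (U : Matrix (Fin n) (Fin p) ℝ) : Set (Matrix (Fin n) (Fin n) ℝ) :=
  {M | ∃ X Y : Matrix (Fin n) (Fin p) ℝ, M = U * Xᵀ + Y * Uᵀ}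

/-- Orthogonal projection onto `T`. -/
noncomputable def PT {n p : ℕ} (U : Matrix (Fin n) (Fin p) ℝ) (M : Matrix (Fin n) (Fin n) ℝ) :
    Matrix (Fin n) (Fin n) ℝ :=
  U * Uᵀ * M + M * (U * Uᵀ) - U * Uᵀ * M * (U * Uᵀ)

/-- `d_{i,k}`: number of "bad" (unobserved or disagreeing) entries between node `i`
and cluster `k`. -/
noncomputable def dval {n p : ℕ} (Obs : Set (Fin n × Fin n)) (A : Matrix (Fin n) (Fin n) ℝ)
    (c : Fin n → Fin p) (i : Fin n) (k : Fin p) : ℕ :=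
  if k = c i then {j : Fin n | c j = k ∧ ((i, j) ∉ Obs ∨ A i j = 0)}.ncard
  else {j : Fin n | c j = k ∧ ((i, j) ∉ Obs ∨ A i j = 1)}.ncard

/-- `D_max`: the largest fraction of bad entries between a node and a cluster. -/
noncomputable def Dmax {n p : ℕ} (Obs : Set (Fin n × Fin n)) (A : Matrix (Fin n) (Fin n) ℝ)
    (c : Fin n → Fin p) : ℝ :=
  sSup (Set.range fun q : Fin n × Fin p =>
    (dval Obs A c q.1 q.2 : ℝ) / min (clusterSize c q.2 : ℝ) (clusterSize c (c q.1) : ℝ))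


lemma valid_posSemidef {n : ℕ} {K : Matrix (Fin n) (Fin n) ℝ} (h : IsValidClustering K) :
    K.PosSemidef := by
  obtain ⟨f, hf⟩ := h
  have : K = (Matrix.of fun k i => if f i = k then (1:ℝ) else 0)ᴴ *
      (Matrix.of fun k i => if f i = k then (1:ℝ) else 0) := by
    ext i j
    simp only [Matrix.mul_apply, Matrix.conjTranspose_apply, Matrix.of_apply, hf, starRingEnd_apply]
    rw [Finset.sum_eq_single (f i)]
    · by_cases hij : f i = f j
      · simp [hij]
      · rw [if_neg hij, if_neg (fun h : f j = f i => hij h.symm)]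
        simp
    · intro k _ hk; simp [Ne.symm hk]
    · simp
  rw [this]
  exact Matrix.posSemidef_conjTranspose_mul_self _

open scoped MatrixOrder in
lemma nuclearNorm_eq_cfcSqrt {n : ℕ} (M : Matrix (Fin n) (Fin n) ℝ) :
    nuclearNorm M = (CFC.sqrt (Mᴴ * M)).trace := by
  rw [CFC.sqrt_eq_cfc, cfc_nnreal_eq_real _ (Mᴴ * M) (Matrix.posSemidef_conjTranspose_mul_self M).nonneg,
    (Matrix.posSemidef_conjTranspose_mul_self M).1.cfc_eq]
  simp only [nuclearNorm, IsHermitian.cfc, Real.coe_sqrt, Real.coe_toNNReal',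
    Unitary.conjStarAlgAut_apply]
  congr 3
  ext i j
  simp [Matrix.diagonal_apply]
  split_ifs
  · exact congrArg Real.sqrt
      (max_eq_left ((Matrix.posSemidef_conjTranspose_mul_self M).eigenvalues_nonneg i)).symm
  · rfl

open scoped MatrixOrder in
lemma nuclearNorm_valid {n : ℕ} {K : Matrix (Fin n) (Fin n) ℝ} (h : IsValidClustering K) :
    nuclearNorm K = n := by
  obtain ⟨f, hf⟩ := h
  have hsymm : Kᴴ = K := by
    ext i j
    simp only [Matrix.conjTranspose_apply, hf, starRingEnd_apply]
    by_cases hij : f i = f j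
    · rw [if_pos hij, if_pos hij.symm]
      simp
    · rw [if_neg hij, if_neg (fun h : f j = f i => hij h.symm)]
      simp
  have hK : K.PosSemidef := valid_posSemidef ⟨f, hf⟩
  have hsq : K ^ 2 = Kᴴ * K := by rw [hsymm, pow_two]
  have : K = CFC.sqrt (Kᴴ * K) := by rw [← hsq, CFC.sqrt_sq K hK.nonneg]
  rw [nuclearNorm_eq_cfcSqrt, ← this, Matrix.trace]
  simp only [Matrix.diag]
  rw [Finset.sum_congr rfl (fun i _ => by rw [hf i i, if_pos rfl])]
  simp

lemma l1Norm_projS_le {n : ℕ} (S : Set (Fin n × Fin n)) (M : Matrix (Fin n) (Fin n) ℝ) :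
    l1Norm (projS S M) ≤ l1Norm M := by
  unfold l1Norm projS
  refine Finset.sum_le_sum fun i _ => Finset.sum_le_sum fun j _ => ?_
  by_cases h : (i, j) ∈ S <;> simp [h, abs_nonneg]

lemma l1Norm_count {n : ℕ} (Obs : Set (Fin n × Fin n)) (A : Matrix (Fin n) (Fin n) ℝ)
    (hA01 : ∀ i j : Fin n, (i, j) ∈ Obs → A i j = 0 ∨ A i j = 1)
    (hAdiag : ∀ i, A i i = 0)
    {K : Matrix (Fin n) (Fin n) ℝ} (hK : IsValidClustering K) :
    l1Norm (projS Obs (1 + A - K)) = disagreements Obs A K := by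
  obtain ⟨f, hf⟩ := hK
  have key : ∀ i j : Fin n, |projS Obs (1 + A - K) i j| =
      if i ≠ j ∧ (i, j) ∈ Obs ∧ A i j ≠ K i j then 1 else 0 := by
    intro i j
    unfold projS
    by_cases hobs : (i, j) ∈ Obs
    · simp only [Matrix.of_apply, if_pos hobs, Matrix.sub_apply, Matrix.add_apply]
      by_cases hij : i = j
      · subst hij
        rw [hAdiag, hf, if_pos rfl]
        simp
      · have h1 : (1 : Matrix (Fin n) (Fin n) ℝ) i j = 0 := Matrix.one_apply_ne hij
        rw [h1, zero_add]
        by_cases hd : A i j = K i j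
        · simp [hd, hij, hobs]
        · rw [if_pos ⟨hij, hobs, hd⟩]
          rcases hA01 i j hobs with ha | ha <;> rw [hf] at hd ⊢ <;>
            by_cases hc : f i = f j <;> simp_all
    · simp [hobs, fun h : i ≠ j ∧ (i, j) ∈ Obs ∧ A i j ≠ K i j => hobs h.2.1]
  unfold l1Norm disagreements
  rw [Finset.sum_congr rfl fun i _ => Finset.sum_congr rfl fun j _ => key i j]
  rw [Set.ncard_eq_toFinset_card', Set.toFinset_setOf, Finset.card_filter]
  push_cast
  rw [Fintype.sum_prod_type]

/-- If the optimum of CP_η is a valid clustering matrix, then it minimizes the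
number of observed disagreements. -/
theorem validity_implies_disagreement_minimization
    {n : ℕ} (hn : 1 ≤ n) (Obs : Set (Fin n × Fin n))
    (hObsDiag : ∀ i : Fin n, (i, i) ∈ Obs)
    (hObsSym : ∀ i j : Fin n, (i, j) ∈ Obs → (j, i) ∈ Obs)
    (A : Matrix (Fin n) (Fin n) ℝ)
    (hA01 : ∀ i j : Fin n, (i, j) ∈ Obs → A i j = 0 ∨ A i j = 1)
    (hAsym : Aᵀ = A) (hAdiag : ∀ i, A i i = 0)
    (η : ℝ) (hη0 : 0 < η) (hη1 : η < 1)
    (Bhat Khat : Matrix (Fin n) (Fin n) ℝ)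
    (hfeas : cpFeasible Obs A Bhat Khat)
    (hopt : ∀ B K : Matrix (Fin n) (Fin n) ℝ,
      cpFeasible Obs A B K → cpObj η Bhat Khat ≤ cpObj η B K)
    (hvalid : IsValidClustering Khat) :
    ∀ K : Matrix (Fin n) (Fin n) ℝ, IsValidClustering K →
      disagreements Obs A Khat ≤ disagreements Obs A K := by
  intro K hK
  obtain ⟨g, hg⟩ := hK
  -- feasible competitor
  set B0 : Matrix (Fin n) (Fin n) ℝ := projS Obs (1 + A - K) with hB0
  have hfeas0 : cpFeasible Obs A B0 K := by
    unfold cpFeasible projS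
    ext i j
    by_cases hobs : (i, j) ∈ Obs
    · simp only [Matrix.of_apply, if_pos hobs, Matrix.add_apply, hB0, projS,
        Matrix.sub_apply, if_pos hobs]
      ring
    · simp [hobs]
  have hnucK : nuclearNorm K = n := nuclearNorm_valid ⟨g, hg⟩
  have hnucKhat : nuclearNorm Khat = n := nuclearNorm_valid hvalid
  have hprojB : projS Obs Bhat = projS Obs (1 + A - Khat) := by
    unfold cpFeasible at hfeas
    ext i j
    by_cases hobs : (i, j) ∈ Obs
    · have := congrFun (congrFun hfeas i) j
      simp only [projS, Matrix.of_apply, if_pos hobs, Matrix.add_apply, Matrix.sub_apply] at this ⊢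
      linarith
    · simp [projS, hobs]
  have hd1 : (disagreements Obs A Khat : ℝ) ≤ l1Norm Bhat := by
    rw [← l1Norm_count Obs A hA01 hAdiag hvalid, ← hprojB]
    exact l1Norm_projS_le Obs Bhat
  have hd2 : l1Norm B0 = (disagreements Obs A K : ℝ) :=
    l1Norm_count Obs A hA01 hAdiag ⟨g, hg⟩
  have hobj := hopt B0 K hfeas0
  unfold cpObj at hobj
  rw [hnucK, hnucKhat] at hobj
  have hl1 : l1Norm Bhat ≤ l1Norm B0 := le_of_mul_le_mul_left (by linarith) hη0
  have : (disagreements Obs A Khat : ℝ) ≤ (disagreements Obs A K : ℝ) := by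
    calc (disagreements Obs A Khat : ℝ) ≤ l1Norm Bhat := hd1
      _ ≤ l1Norm B0 := hl1
      _ = _ := hd2
  exact_mod_cast this
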